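/- The constant K-matrix K = 𝒦₀ (given by 𝒦₀ v_j = v_{-j}) solves the reflection equation: for any ℤ_n-symmetric R-matrix of Belavin form R(z) = Σ_α u_α(z) I_α ⊗ I_α^{-1}, one has (I⊗𝒦₀) R₂₁(z₁+z₂) (𝒦₀⊗I) R₁₂(z₁−z₂) = R₂₁(z₁−z₂) (𝒦₀⊗I) R₁₂(z₁+z₂) (I⊗𝒦₀), where R₂₁(z) = Σ_α u_α(z) I_α^{-1} ⊗ I_α and R₁₂(z) = Σ_α u_α(z) I_α ⊗ I_α^{-1}. -/
import Mathlib


open Matrix Kronecker Complex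

/-- ω = exp(2πi/n). -/
noncomputable def omegaC (n : ℕ) : ℂ := Complex.exp (2 * Real.pi * Complex.I / n)

/-- The matrix g with g v_j = ω^j v_j (entry convention: (A v_j)_i = A i j). -/
noncomputable def gMat (n : ℕ) : Matrix (ZMod n) (ZMod n) ℂ :=
  Matrix.of fun i j => if i = j then omegaC n ^ j.val else 0

/-- The matrix h with h v_j = v_{j-1}. -/
noncomputable def hMat (n : ℕ) : Matrix (ZMod n) (ZMod n) ℂ :=
  Matrix.of fun i j => if i = j - 1 then 1 else 0

/-- I_α = g^{α₁} h^{α₂}. -/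
noncomputable def IMat (n : ℕ) [NeZero n] (α : ZMod n × ZMod n) :
    Matrix (ZMod n) (ZMod n) ℂ :=
  gMat n ^ α.1.val * hMat n ^ α.2.val

/-- 𝒦₀ with 𝒦₀ v_j = v_{-j}. -/
noncomputable def K0Mat (n : ℕ) : Matrix (ZMod n) (ZMod n) ℂ :=
  Matrix.of fun i j => if i = -j then 1 else 0

/-- The flip P(x ⊗ y) = y ⊗ x on ℂ^n ⊗ ℂ^n. -/
noncomputable def Pflip (n : ℕ) :
    Matrix (ZMod n × ZMod n) (ZMod n × ZMod n) ℂ :=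
  Matrix.of fun p q => if p.1 = q.2 ∧ p.2 = q.1 then 1 else 0

noncomputable def chiC (n : ℕ) (k : ZMod n) : ℂ := omegaC n ^ k.val

lemma omega_pow_n (n : ℕ) [NeZero n] : omegaC n ^ n = 1 := by
  rw [omegaC, ← Complex.exp_nat_mul]
  have hne : (n:ℂ) ≠ 0 := Nat.cast_ne_zero.2 (NeZero.ne n)
  have : (n : ℂ) * (2 * Real.pi * Complex.I / n) = 2 * Real.pi * Complex.I := by
    field_simp
  rw [this]
  simpa [mul_assoc] using Complex.exp_two_pi_mul_I

lemma omega_pow_mod (n : ℕ) [NeZero n] (a : ℕ) : omegaC n ^ (a % n) = omegaC n ^ a := by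
  conv_rhs => rw [← Nat.div_add_mod a n]
  rw [pow_add, pow_mul, omega_pow_n, one_pow, one_mul]

lemma chiC_add (n : ℕ) [NeZero n] (x y : ZMod n) :
    chiC n (x + y) = chiC n x * chiC n y := by
  rw [chiC, chiC, chiC, ZMod.val_add, omega_pow_mod, pow_add]

lemma chiC_zero (n : ℕ) [NeZero n] : chiC n 0 = 1 := by
  simp [chiC, ZMod.val_zero]

lemma chiC_neg_mul (n : ℕ) [NeZero n] (x : ZMod n) : chiC n x * chiC n (-x) = 1 := by
  rw [← chiC_add, add_neg_cancel, chiC_zero]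

noncomputable def Emat (n : ℕ) (α : ZMod n × ZMod n) : Matrix (ZMod n) (ZMod n) ℂ :=
  Matrix.of fun i j => if i = j - α.2 then chiC n (α.1 * i) else 0

lemma gMat_pow (n : ℕ) [NeZero n] (m : ℕ) (i j : ZMod n) :
    (gMat n ^ m) i j = if i = j then omegaC n ^ (m * j.val) else 0 := by
  induction m generalizing i j with
  | zero => simp [Matrix.one_apply]
  | succ m ih =>
    rw [pow_succ, Matrix.mul_apply, Finset.sum_eq_single j]
    · rw [ih]
      by_cases h : i = j
      · rw [if_pos h, if_pos h, gMat, Matrix.of_apply, if_pos rfl, ← pow_add,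
          Nat.succ_mul]
      · rw [if_neg h, if_neg h, zero_mul]
    · intro b _ hb
      rw [gMat]
      simp [hb]
    · simp

lemma hMat_pow (n : ℕ) [NeZero n] (m : ℕ) (i j : ZMod n) :
    (hMat n ^ m) i j = if i = j - (m : ZMod n) then 1 else 0 := by
  induction m generalizing i j with
  | zero => simp [Matrix.one_apply]
  | succ m ih =>
    rw [pow_succ, Matrix.mul_apply, Finset.sum_eq_single (j - 1)]
    · rw [ih]
      push_cast
      by_cases h : i = j - ((m : ZMod n) + 1)
      · have h1 : i = j - 1 - (m : ZMod n) := by rw [h]; ring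
        rw [if_pos h, if_pos h1, hMat, Matrix.of_apply, if_pos rfl, mul_one]
      · have h1 : ¬ i = j - 1 - (m : ZMod n) := fun hc => h (by rw [hc]; ring)
        rw [if_neg h, if_neg h1, zero_mul]
    · intro b _ hb
      rw [hMat]
      simp [hb]
    · simp [hMat]

lemma IMat_eq (n : ℕ) [NeZero n] (α : ZMod n × ZMod n) : IMat n α = Emat n α := by
  ext i j
  rw [IMat, Matrix.mul_apply, Finset.sum_eq_single i]
  · rw [gMat_pow, hMat_pow, if_pos rfl]
    have hv : ((α.2.val : ℕ) : ZMod n) = α.2 := by simp [ZMod.natCast_val]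
    have hw : omegaC n ^ (α.1.val * i.val) = chiC n (α.1 * i) := by
      rw [chiC, ZMod.val_mul, omega_pow_mod]
    rw [hv, Emat]
    simp only [Matrix.of_apply]
    by_cases h : i = j - α.2
    · rw [if_pos h, if_pos h, mul_one, hw]
    · rw [if_neg h, if_neg h, mul_zero]
  · intro b _ hb
    rw [gMat_pow, if_neg (Ne.symm hb), zero_mul]
  · simp

lemma Emat_mul (n : ℕ) [NeZero n] (α β : ZMod n × ZMod n) :
    Emat n α * Emat n β = chiC n (β.1 * α.2) • Emat n (α + β) := by
  ext i j
  rw [Matrix.mul_apply, Finset.sum_eq_single (j - β.2)]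
  · simp only [Emat, Matrix.of_apply, Matrix.smul_apply, smul_eq_mul, if_pos rfl,
      Prod.fst_add, Prod.snd_add]
    by_cases h : i = j - (α.2 + β.2)
    · have h1 : i = j - β.2 - α.2 := by rw [h]; ring
      have h2 : j - β.2 = i + α.2 := by rw [h1]; ring
      have e1 : β.1 * (i + α.2) = β.1 * i + β.1 * α.2 := by ring
      have e2 : (α.1 + β.1) * i = α.1 * i + β.1 * i := by ring
      rw [if_pos h1, if_pos h, h2, e1, e2, chiC_add, chiC_add]
      simp only [if_true]
      ring
    · have h1 : ¬ i = j - β.2 - α.2 := fun hc => h (by rw [hc]; ring)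
      simp [h1, h]
  · intro b _ hb
    simp [Emat, hb]
  · simp [Emat]

lemma Emat_zero (n : ℕ) [NeZero n] : Emat n 0 = 1 := by
  ext i j
  simp [Emat, Matrix.one_apply, chiC_zero]

lemma K0_mul_K0 (n : ℕ) [NeZero n] : K0Mat n * K0Mat n = 1 := by
  ext i j
  rw [Matrix.mul_apply, Finset.sum_eq_single (-j)]
  · by_cases h : i = j <;> simp [K0Mat, Matrix.one_apply, h]
  · intro b _ hb
    have : b ≠ -j := hb
    simp [K0Mat, this]
  · simp [K0Mat]

lemma K0_mul_Emat (n : ℕ) [NeZero n] (α : ZMod n × ZMod n) :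
    K0Mat n * Emat n α = Emat n (-α) * K0Mat n := by
  ext i j
  rw [Matrix.mul_apply, Matrix.mul_apply, Finset.sum_eq_single (-i),
    Finset.sum_eq_single (-j)]
  · simp only [K0Mat, Emat, Matrix.of_apply, if_pos rfl, Prod.fst_neg, Prod.snd_neg,
      neg_neg, one_mul, mul_one]
    by_cases h : i = -j - -α.2
    · have h' : -i = j - α.2 := by
        rw [h]; ring
      have hval : α.1 * -i = -α.1 * i := by ring
      rw [if_pos h, if_pos h', hval]
      simp
    · have h' : ¬ (-i = j - α.2) := fun hc => h (by rw [← neg_neg i, hc]; ring)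
      rw [if_neg h, if_neg h']
      simp
  · intro b _ hb
    simp [K0Mat, hb]
  · simp [K0Mat]
  · intro b _ hb
    have : i ≠ -b := fun hc => hb (by rw [hc, neg_neg])
    simp [K0Mat, this]
  · simp [K0Mat]

lemma IMat_inv (n : ℕ) [NeZero n] (α : ZMod n × ZMod n) :
    (IMat n α)⁻¹ = chiC n (α.1 * α.2) • Emat n (-α) := by
  apply Matrix.inv_eq_right_inv
  rw [IMat_eq, Matrix.mul_smul, Emat_mul, add_neg_cancel, Emat_zero, smul_smul,
    Prod.fst_neg]
  have : -α.1 * α.2 = -(α.1 * α.2) := by ring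
  rw [this, chiC_neg_mul, one_smul]

lemma EKE (n : ℕ) [NeZero n] (γ δ : ZMod n × ZMod n) :
    Emat n γ * K0Mat n * Emat n δ =
      chiC n (-δ.1 * γ.2) • (Emat n (γ - δ) * K0Mat n) := by
  rw [mul_assoc, K0_mul_Emat, ← mul_assoc, Emat_mul, smul_mul_assoc, Prod.fst_neg,
    sub_eq_add_neg]

lemma key_term (n : ℕ) [NeZero n] (α β : ZMod n × ZMod n) :
    ((1 : Matrix (ZMod n) (ZMod n) ℂ) ⊗ₖ K0Mat n) * ((IMat n α)⁻¹ ⊗ₖ IMat n α) *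
        (K0Mat n ⊗ₖ (1 : Matrix (ZMod n) (ZMod n) ℂ)) * (IMat n β ⊗ₖ (IMat n β)⁻¹) =
      ((IMat n β)⁻¹ ⊗ₖ IMat n β) * (K0Mat n ⊗ₖ (1 : Matrix (ZMod n) (ZMod n) ℂ)) *
        (IMat n α ⊗ₖ (IMat n α)⁻¹) *
        ((1 : Matrix (ZMod n) (ZMod n) ℂ) ⊗ₖ K0Mat n) := by
  rw [IMat_inv, IMat_inv, IMat_eq, IMat_eq]
  simp only [Matrix.smul_kronecker, Matrix.kronecker_smul, smul_mul_assoc,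
    mul_smul_comm, smul_smul, ← Matrix.mul_kronecker_mul, Matrix.one_mul,
    Matrix.mul_one]
  -- move K0 to the right in the second tensor factors
  have hL2 : K0Mat n * Emat n α * Emat n (-β) =
      chiC n (β.1 * -α.2) • (Emat n (β - α) * K0Mat n) := by
    rw [K0_mul_Emat, EKE]
    have h1 : -α - -β = β - α := by abel
    have h2 : -(-β).1 * (-α).2 = β.1 * -α.2 := by
      simp only [Prod.fst_neg, Prod.snd_neg, neg_neg]
    rw [h1, h2]
  have hR2 : Emat n β * Emat n (-α) * K0Mat n =
      chiC n (-α.1 * β.2) • (Emat n (β - α) * K0Mat n) := by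
    rw [Emat_mul, smul_mul_assoc, Prod.fst_neg, sub_eq_add_neg]
  rw [EKE, EKE, hL2, hR2]
  simp only [Matrix.smul_kronecker, Matrix.kronecker_smul, smul_smul,
    Prod.fst_neg, Prod.snd_neg]
  have hM : -α - β = -β - α := by abel
  rw [hM]
  congr 1
  simp only [← chiC_add]
  congr 1
  ring

/-- The constant K-matrix 𝒦₀ solves the reflection equation for any R-matrix of
Belavin form. -/
theorem stmt8 (n : ℕ) [NeZero n] (hn : 2 ≤ n)
    (u : ZMod n × ZMod n → ℂ → ℂ) (z₁ z₂ : ℂ)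
    (R12 R21 : ℂ → Matrix (ZMod n × ZMod n) (ZMod n × ZMod n) ℂ)
    (hR12 : ∀ z, R12 z = ∑ α : ZMod n × ZMod n, u α z • (IMat n α ⊗ₖ (IMat n α)⁻¹))
    (hR21 : ∀ z, R21 z = ∑ α : ZMod n × ZMod n, u α z • ((IMat n α)⁻¹ ⊗ₖ IMat n α)) :
    ((1 : Matrix (ZMod n) (ZMod n) ℂ) ⊗ₖ K0Mat n) * R21 (z₁ + z₂) *
        (K0Mat n ⊗ₖ (1 : Matrix (ZMod n) (ZMod n) ℂ)) * R12 (z₁ - z₂) =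
      R21 (z₁ - z₂) * (K0Mat n ⊗ₖ (1 : Matrix (ZMod n) (ZMod n) ℂ)) *
        R12 (z₁ + z₂) * ((1 : Matrix (ZMod n) (ZMod n) ℂ) ⊗ₖ K0Mat n) := by
  rw [hR12, hR12, hR21, hR21]
  simp only [Finset.mul_sum, Finset.sum_mul, Finset.smul_sum, smul_mul_assoc,
    mul_smul_comm, smul_smul]
  conv_rhs => rw [Finset.sum_comm]
  refine Finset.sum_congr rfl fun y _ => Finset.sum_congr rfl fun z _ => ?_
  rw [key_term n z y, mul_comm]
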